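/- Let M be an MSC with processes p and q, p ≠ q, and a a label. Suppose for every event e on process p with γ(e)=0 there is no event f with label (q,a) parallel to e. Then there exists a path in the directed graph (E, →proc ∪ →msg) that passes through all events e on process p with γ(e)=0 and through all events labeled (q,a). -/

import Mathlib

/-!
Events on a single process are totally ordered, and by hypothesis every `0`-marked event of `p`
is comparable with every `(q, a)`-event, so the union of the two sets is a finite chain of the
order `≤ = (→proc ∪ →msg)*`. Listing it in increasing order and joining consecutive elements by
paths of the MSC gives one path through all of them.
-/

/-- A message sequence chart (MSC) over processes `P`, labels `A`, and event set `E`. -/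
structure MSC (P A E : Type) [Fintype E] where
  proc : E → P
  lbl : E → A
  pnext : E → E → Prop
  msg : E → E → Prop
  pnext_proc : ∀ {e f}, pnext e f → proc e = proc f
  pnext_succ_unique : ∀ {e f f'}, pnext e f → pnext e f' → f = f'
  pnext_pred_unique : ∀ {e e' f}, pnext e f → pnext e' f → e = e'
  msg_proc : ∀ {e f}, msg e f → proc e ≠ proc f
  msg_send_unique : ∀ {e f f'}, msg e f → msg e f' → f = f'
  msg_recv_unique : ∀ {e e' f}, msg e f → msg e' f → e = e'
  msg_not_send_recv : ∀ {e f g}, msg e f → ¬ msg g e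
  acyclic : ∀ e, ¬ Relation.TransGen (fun a b => pnext a b ∨ msg a b) e e
  proc_total : ∀ {e f}, proc e = proc f →
    Relation.ReflTransGen pnext e f ∨ Relation.ReflTransGen pnext f e
  fifo : ∀ {e e' f f'}, msg e f → msg e' f' → proc e = proc e' → proc f = proc f' →
    (Relation.ReflTransGen pnext e e' ↔ Relation.ReflTransGen pnext f f')

namespace MSC

variable {P A E : Type} [Fintype E]

/-- The edge relation `→proc ∪ →msg`. -/
def edge (M : MSC P A E) (e f : E) : Prop := M.pnext e f ∨ M.msg e f

/-- The partial order `≤ = (→proc ∪ →msg)*`. -/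
def le (M : MSC P A E) (e f : E) : Prop := Relation.ReflTransGen M.edge e f

/-- The strict order `< = (→proc ∪ →msg)⁺`. -/
def lt (M : MSC P A E) (e f : E) : Prop := Relation.TransGen M.edge e f

/-- `e ∥ f`: incomparability w.r.t. `≤`. -/
def par (M : MSC P A E) (e f : E) : Prop := ¬ M.le e f ∧ ¬ M.le f e

/-- `e ⋖ f`: strict order minus the direct process/message edges. -/
def cless (M : MSC P A E) (e f : E) : Prop := M.lt e f ∧ ¬ M.pnext e f ∧ ¬ M.msg e f

/-- The (reflexive) order along a single process: `→proc*`. -/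
def pord (M : MSC P A E) (e f : E) : Prop := Relation.ReflTransGen M.pnext e f

/-- `Past_p(f) = {g ∈ E_p : g < f}`. -/
def PastP (M : MSC P A E) (p : P) (f : E) : Set E := {g | M.proc g = p ∧ M.lt g f}

/-- `Fut_p(f) = {g ∈ E_p : f < g}`. -/
def FutP (M : MSC P A E) (p : P) (f : E) : Set E := {g | M.proc g = p ∧ M.lt f g}

/-- `Par_p(f) = {g ∈ E_p : g ∥ f}`. -/
def ParP (M : MSC P A E) (p : P) (f : E) : Set E := {g | M.proc g = p ∧ M.par g f}

/-- `S` is an interval of consecutive events on process `p`. -/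
def IsInterval (M : MSC P A E) (p : P) (S : Set E) : Prop :=
  (∀ e ∈ S, M.proc e = p) ∧
  ∀ e f g, e ∈ S → g ∈ S → M.pord e f → M.pord f g → f ∈ S

/-- The interval `[e,e'] = {g ∈ E_p : e ≤ g ≤ e'}` on process `p`. -/
def Intv (M : MSC P A E) (p : P) (e e' : E) : Set E :=
  {g | M.proc g = p ∧ M.pord e g ∧ M.pord g e'}

end MSC

namespace List

variable {α : Type*} {r : α → α → Prop}

theorem exists_isChain_cons_of_isChain_reflTransGen {a : α} {l : List α}
    (h : IsChain (Relation.ReflTransGen r) (a :: l)) :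
    ∃ l', IsChain r (a :: l') ∧ a :: l ⊆ a :: l' := by
  induction l generalizing a with
  | nil => exact ⟨[], .singleton a, Subset.refl _⟩
  | cons b t ih =>
    obtain ⟨hab, hbt⟩ := isChain_cons_cons.1 h
    obtain ⟨m, hm, hsub⟩ := ih hbt
    obtain ⟨k, hk, hlast⟩ := exists_isChain_cons_of_relationReflTransGen hab
    have hsplit : a :: k = (a :: k).dropLast ++ [b] := by
      rw [← hlast, dropLast_append_getLast]
    have hb : b ∈ a :: k := hlast ▸ getLast_mem _
    refine ⟨k ++ m, ?_, ?_⟩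
    · rw [← cons_append, hsplit, append_assoc, singleton_append]
      exact isChain_split.2 ⟨hsplit ▸ hk, hm⟩
    · rw [← cons_append]
      refine cons_subset.2 ⟨mem_cons_self, cons_subset.2 ⟨subset_append_left _ _ hb, ?_⟩⟩
      intro x hx
      rcases mem_cons.1 (hsub (mem_cons_of_mem b hx)) with rfl | hxm
      · exact subset_append_left _ _ hb
      · exact mem_append_right _ hxm

theorem exists_isChain_of_isChain_reflTransGen {l : List α}
    (h : IsChain (Relation.ReflTransGen r) l) : ∃ l', IsChain r l' ∧ l ⊆ l' := by
  cases l with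
  | nil => exact ⟨[], .nil, Subset.refl _⟩
  | cons a t =>
    obtain ⟨l', hl', hsub⟩ := exists_isChain_cons_of_isChain_reflTransGen h
    exact ⟨a :: l', hl', hsub⟩

end List

namespace Finset

variable {α : Type*} {r : α → α → Prop}

theorem exists_pairwise_of_total [IsTrans α r] (s : Finset α)
    (hs : ∀ x ∈ s, ∀ y ∈ s, r x y ∨ r y x) :
    ∃ l : List α, l.Pairwise r ∧ ∀ x ∈ s, x ∈ l := by
  classical
  let rs : s → s → Prop := fun x y => r x y
  have : Std.Total rs := ⟨fun x y => hs x x.2 y y.2⟩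
  have : IsTrans s rs := ⟨fun _ _ _ => _root_.trans (r := r)⟩
  refine ⟨(s.attach.toList.insertionSort rs).map Subtype.val,
    List.pairwise_map.2 (List.pairwise_insertionSort rs _), fun x hx => ?_⟩
  exact List.mem_map.2 ⟨⟨x, hx⟩, (List.perm_insertionSort rs _).mem_iff.2 (by simp), rfl⟩

theorem exists_isChain_of_reflTransGen_total (s : Finset α)
    (hs : ∀ x ∈ s, ∀ y ∈ s, Relation.ReflTransGen r x y ∨ Relation.ReflTransGen r y x) :
    ∃ l : List α, l.IsChain r ∧ ∀ x ∈ s, x ∈ l := by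
  obtain ⟨l, hl, hsl⟩ := s.exists_pairwise_of_total hs
  obtain ⟨l', hl', hll'⟩ := List.exists_isChain_of_isChain_reflTransGen hl.isChain
  exact ⟨l', hl', fun x hx => hll' (hsl x hx)⟩

end Finset

namespace MSC

variable {P A E : Type} [Fintype E] (M : MSC P A E)

theorem le_of_pord {e f : E} (h : M.pord e f) : M.le e f :=
  Relation.ReflTransGen.mono (fun _ _ => Or.inl) _ _ h

theorem le_total_of_proc_eq {e f : E} (h : M.proc e = M.proc f) : M.le e f ∨ M.le f e :=
  (M.proc_total h).imp M.le_of_pord M.le_of_pord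

theorem le_total_of_not_par {e f : E} (h : ¬ M.par e f) : M.le e f ∨ M.le f e := by
  unfold par at h
  tauto

end MSC

theorem stmt2_general {P A E : Type} [Fintype E] (M : MSC P A E) (p q : P)
    (a : A) (γ : E → Bool)
    (h : ∀ e, M.proc e = p → γ e = false →
      ∀ f, M.proc f = q → M.lbl f = a → ¬ M.par e f) :
    ∃ l : List E, l.Chain' M.edge ∧
      (∀ e, M.proc e = p → γ e = false → e ∈ l) ∧
      (∀ f, M.proc f = q → M.lbl f = a → f ∈ l) := by
  classical
  let S : Finset E := {e | (M.proc e = p ∧ γ e = false) ∨ (M.proc e = q ∧ M.lbl e = a)}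
  have hS : ∀ e ∈ S, ∀ f ∈ S, M.le e f ∨ M.le f e := by
    intro e he f hf
    simp only [S, Finset.mem_filter, Finset.mem_univ, true_and] at he hf
    rcases he with ⟨hep, heγ⟩ | ⟨heq, hea⟩ <;> rcases hf with ⟨hfp, hfγ⟩ | ⟨hfq, hfa⟩
    · exact M.le_total_of_proc_eq (hep.trans hfp.symm)
    · exact M.le_total_of_not_par (h e hep heγ f hfq hfa)
    · exact (M.le_total_of_not_par (h f hfp hfγ e heq hea)).symm
    · exact M.le_total_of_proc_eq (heq.trans hfq.symm)
  obtain ⟨l, hl, hSl⟩ := S.exists_isChain_of_reflTransGen_total hS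
  exact ⟨l, hl, fun e hp hγ => hSl e (by simp [S, hp, hγ]),
    fun f hq ha => hSl f (by simp [S, hq, ha])⟩

/-- if no `0`-marked event on process `p` is parallel to any event
labeled `(q,a)`, then there is a path through all these events. -/
theorem stmt2 {P A E : Type} [Fintype E] (M : MSC P A E) (p q : P) (hpq : p ≠ q)
    (a : A) (γ : E → Bool)
    (h : ∀ e, M.proc e = p → γ e = false →
      ∀ f, M.proc f = q → M.lbl f = a → ¬ M.par e f) :
    ∃ l : List E, l.Chain' M.edge ∧
      (∀ e, M.proc e = p → γ e = false → e ∈ l) ∧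
      (∀ f, M.proc f = q → M.lbl f = a → f ∈ l) :=
  stmt2_general M p q a γ h
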